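/- arXiv:2502.05882 — 6 statements merged into one kernel-verified Lean document; each statement's English description precedes it below -/
import Mathlib

section
/- For any 0 < α < 1 and any locally integrable f, sup_B OSC_{B,α}(f) ≤ 2(1−α)^{-1} ‖f‖_BMO. -/
open MeasureTheory

/-- The oscillation of `f` on a set `E`: `esssup_E f - essinf_E f`. -/
noncomputable def osc {X : Type*} [MeasurableSpace X] (μ : Measure X)
    (E : Set X) (f : X → ℝ) : ℝ :=
  essSup f (μ.restrict E) - essInf f (μ.restrict E)

/-- For any `0 < α < 1` and locally integrable `f`:
`sup_B OSC_{B,α}(f) ≤ 2(1-α)⁻¹ ‖f‖_BMO` (with the BMO norm expressed through an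
upper bound `N` over all balls). -/
theorem osc_alpha_le_bmo {X : Type*} [MeasurableSpace X] (μ : Measure X)
    (𝓑 : Set (Set X))
    (hmeas : ∀ B ∈ 𝓑, MeasurableSet B)
    (hpos : ∀ B ∈ 𝓑, 0 < μ B) (hfin : ∀ B ∈ 𝓑, μ B < ⊤)
    (α : ℝ) (hα0 : 0 < α) (hα1 : α < 1)
    (f : X → ℝ) (hf : ∀ B ∈ 𝓑, IntegrableOn f B μ)
    (N : ℝ)
    (hBMO : ∀ B ∈ 𝓑,
      (μ B).toReal⁻¹ *
        ∫ x in B, |f x - (μ B).toReal⁻¹ * ∫ y in B, f y ∂μ| ∂μ ≤ N) :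
    ∀ B ∈ 𝓑,
      sInf {r : ℝ | ∃ E : Set X, MeasurableSet E ∧ E ⊆ B ∧
          ENNReal.ofReal α * μ B < μ E ∧ r = osc μ E f} ≤
        2 * (1 - α)⁻¹ * N := by
  intro B hB
  have hBm := hmeas B hB
  have hBpos := hpos B hB
  have hBfin := hfin B hB
  have hμt : 0 < (μ B).toReal := ENNReal.toReal_pos hBpos.ne' hBfin.ne
  have hone : (0:ℝ) < 1 - α := by linarith
  set c : ℝ := (μ B).toReal⁻¹ * ∫ y in B, f y ∂μ with hc
  set g : X → ℝ := fun x => |f x - c| with hgdef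
  have hfi := hf B hB
  have hgi : Integrable g (μ.restrict B) :=
    (hfi.sub (integrableOn_const hBfin.ne)).abs
  have hBMOB := hBMO B hB
  set I : ℝ := ∫ x in B, g x ∂μ with hIdef
  have hI0 : (0:ℝ) ≤ I := integral_nonneg fun x => abs_nonneg _
  have hN : (0:ℝ) ≤ N := le_trans (by positivity) hBMOB
  have hIN : I ≤ N * (μ B).toReal := by
    have h := hBMOB
    rw [inv_mul_le_iff₀ hμt] at h
    linarith [h]
  have hrestr_fin : ∀ s : Set X, (μ.restrict B) s ≠ ⊤ := by
    intro s
    exact ((measure_mono (Set.subset_univ s)).trans_lt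
      (by rwa [Measure.restrict_apply_univ])).ne
  have markov : ∀ t : ℝ, t * ((μ.restrict B) {x | t ≤ g x}).toReal ≤ I := fun t =>
    mul_meas_ge_le_integral_of_nonneg (Filter.Eventually.of_forall fun x => abs_nonneg _) hgi t
  set T : ℝ := (I + 1) / (α * (μ B).toReal) with hTdef
  have hT0 : (0:ℝ) < T := by positivity
  have hTmul : T * (α * (μ B).toReal) = I + 1 :=
    div_mul_cancel₀ _ (by positivity)
  have hTq : (μ.restrict B) {x | T ≤ g x} ≤ ENNReal.ofReal α * μ B := by
    have h1 : ((μ.restrict B) {x | T ≤ g x}).toReal ≤ α * (μ B).toReal := by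
      have h2 := markov T
      have h3 : (0:ℝ) ≤ ((μ.restrict B) {x | T ≤ g x}).toReal := ENNReal.toReal_nonneg
      nlinarith [mul_pos hα0 hμt]
    calc (μ.restrict B) {x | T ≤ g x} ≤ ENNReal.ofReal (α * (μ B).toReal) :=
          (ENNReal.le_ofReal_iff_toReal_le (hrestr_fin _) (by positivity)).2 h1
      _ = ENNReal.ofReal α * μ B := by
          rw [ENNReal.ofReal_mul hα0.le, ENNReal.ofReal_toReal hBfin.ne]
  -- key: quantile bounds on essential bounds over any admissible E
  have key : ∀ E : Set X, MeasurableSet E → E ⊆ B → ENNReal.ofReal α * μ B < μ E →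
      (∀ a, (μ.restrict E) {x | f x < a} = 0 → a ≤ c + T) ∧
      (∀ a, (μ.restrict E) {x | a < f x} = 0 → c - T ≤ a) := by
    intro E hEm hEB hEμ
    have hpos1 : (μ.restrict E) {x | g x < T} ≠ 0 := by
      intro h0
      have h1 : (μ.restrict E) {x | T ≤ g x} ≤ (μ.restrict B) {x | T ≤ g x} := by
        rw [Measure.restrict_apply' hEm, Measure.restrict_apply' hBm]
        exact measure_mono (Set.inter_subset_inter_right _ hEB)
      have h2 : μ E ≤ (μ.restrict E) {x | g x < T} + (μ.restrict E) {x | T ≤ g x} := by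
        have hsub : (Set.univ : Set X) ⊆ {x | g x < T} ∪ {x | T ≤ g x} :=
          fun x _ => (lt_or_ge (g x) T).imp id id
        calc μ E = (μ.restrict E) Set.univ := (Measure.restrict_apply_univ E).symm
          _ ≤ _ := (measure_mono hsub).trans (measure_union_le _ _)
      rw [h0, zero_add] at h2
      exact absurd (h2.trans (h1.trans hTq)) (not_le.2 hEμ)
    constructor
    · intro a ha
      by_contra hlt
      push_neg at hlt
      refine hpos1 (measure_mono_null ?_ ha)
      intro x hx
      have h1 : f x - c ≤ |f x - c| := le_abs_self _
      have h2 : |f x - c| < T := hx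
      have : f x < a := by linarith
      exact this
    · intro a ha
      by_contra hlt
      push_neg at hlt
      refine hpos1 (measure_mono_null ?_ ha)
      intro x hx
      have h1 : c - f x ≤ |f x - c| := by
        rw [abs_sub_comm]; exact le_abs_self _
      have h2 : |f x - c| < T := hx
      have : a < f x := by linarith
      exact this
  have bddS : BddBelow {r : ℝ | ∃ E : Set X, MeasurableSet E ∧ E ⊆ B ∧
      ENNReal.ofReal α * μ B < μ E ∧ r = osc μ E f} := by
    refine ⟨min (c - T) 0 - max (c + T) 0, ?_⟩
    rintro r ⟨E, hEm, hEB, hEμ, rfl⟩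
    obtain ⟨k1, k2⟩ := key E hEm hEB hEμ
    have hsup : min (c - T) 0 ≤ essSup f (μ.restrict E) := by
      rw [essSup_eq_sInf]
      exact Real.le_sInf (fun a ha => (min_le_left _ _).trans (k2 a ha)) (min_le_right _ _)
    have hinf : essInf f (μ.restrict E) ≤ max (c + T) 0 := by
      rw [essInf_eq_sSup]
      exact Real.sSup_le (fun a ha => (k1 a ha).trans (le_max_left _ _)) (le_max_right _ _)
    simp only [osc]
    linarith
  refine le_of_forall_pos_le_add ?_
  intro ε hε
  obtain ⟨lam, hlam⟩ : ∃ l : ℝ, l = (1 - α)⁻¹ * N + ε / 2 := ⟨_, rfl⟩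
  have hlam0 : (0:ℝ) < lam :=
    hlam ▸ add_pos_of_nonneg_of_pos (mul_nonneg (inv_nonneg.2 hone.le) hN) (half_pos hε)
  obtain ⟨f', hf'meas, hff'⟩ : ∃ f' : X → ℝ, StronglyMeasurable f' ∧ f =ᵐ[μ.restrict B] f' :=
    ⟨hfi.1.mk f, hfi.1.stronglyMeasurable_mk, hfi.1.ae_eq_mk⟩
  set E : Set X := B ∩ {x | |f' x - c| ≤ lam} with hE
  have hEm : MeasurableSet E :=
    hBm.inter (measurableSet_le ((hf'meas.measurable.sub measurable_const).abs) measurable_const)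
  have hEB : E ⊆ B := Set.inter_subset_left
  have hDmeas : (μ.restrict B) {x | lam < |f' x - c|} = (μ.restrict B) {x | lam < g x} := by
    refine measure_congr ?_
    filter_upwards [hff'] with x hx
    change (lam < |f' x - c|) = (lam < |f x - c|)
    rw [hx]
  have hDbound : (μ.restrict B) {x | lam < g x} < ENNReal.ofReal (1 - α) * μ B := by
    have h1 : ((μ.restrict B) {x | lam < g x}).toReal < (1 - α) * (μ B).toReal := by
      have h2 : (μ.restrict B) {x | lam < g x} ≤ (μ.restrict B) {x | lam ≤ g x} :=
        measure_mono (Set.setOf_subset_setOf.2 fun x hx => le_of_lt hx)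
      have h3 := markov lam
      have h4 : ((μ.restrict B) {x | lam < g x}).toReal ≤
          ((μ.restrict B) {x | lam ≤ g x}).toReal :=
        ENNReal.toReal_mono (hrestr_fin _) h2
      have h5 : N < (1 - α) * lam := by
        have he : (1 - α) * lam = N + (1 - α) * (ε / 2) := by
          rw [hlam, mul_add, ← mul_assoc, mul_inv_cancel₀ hone.ne', one_mul]
        nlinarith [mul_pos hone (half_pos hε)]
      have h6 : N * (μ B).toReal < ((1 - α) * lam) * (μ B).toReal :=
        mul_lt_mul_of_pos_right h5 hμt
      have h7 : lam * ((μ.restrict B) {x | lam < g x}).toReal <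
          lam * ((1 - α) * (μ B).toReal) := by
        nlinarith [mul_le_mul_of_nonneg_left h4 hlam0.le]
      exact lt_of_mul_lt_mul_left h7 hlam0.le
    calc (μ.restrict B) {x | lam < g x} < ENNReal.ofReal ((1 - α) * (μ B).toReal) :=
          (ENNReal.lt_ofReal_iff_toReal_lt (hrestr_fin _)).2 h1
      _ = ENNReal.ofReal (1 - α) * μ B := by
          rw [ENNReal.ofReal_mul hone.le, ENNReal.ofReal_toReal hBfin.ne]
  have hEμ : ENNReal.ofReal α * μ B < μ E := by
    by_contra hcon
    push_neg at hcon
    have hcover : μ B ≤ μ E + (μ.restrict B) {x | lam < |f' x - c|} := by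
      rw [Measure.restrict_apply' hBm]
      have hsub : B ⊆ E ∪ ({x | lam < |f' x - c|} ∩ B) := by
        intro x hx
        rcases le_or_gt (|f' x - c|) lam with h | h
        · exact Or.inl ⟨hx, h⟩
        · exact Or.inr ⟨h, hx⟩
      exact (measure_mono hsub).trans (measure_union_le _ _)
    rw [hDmeas] at hcover
    have hmulne : ENNReal.ofReal α * μ B ≠ ⊤ :=
      ENNReal.mul_ne_top ENNReal.ofReal_ne_top hBfin.ne
    have hlt : μ B < μ B := by
      calc μ B ≤ μ E + (μ.restrict B) {x | lam < g x} := hcover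
        _ ≤ ENNReal.ofReal α * μ B + (μ.restrict B) {x | lam < g x} :=
            add_le_add_left hcon _
        _ < ENNReal.ofReal α * μ B + ENNReal.ofReal (1 - α) * μ B :=
            ENNReal.add_lt_add_left hmulne hDbound
        _ = μ B := by
            rw [← add_mul, ← ENNReal.ofReal_add hα0.le hone.le]
            have : α + (1 - α) = 1 := by ring
            rw [this, ENNReal.ofReal_one, one_mul]
    exact absurd hlt (lt_irrefl _)
  obtain ⟨k1, k2⟩ := key E hEm hEB hEμ
  have hffE : f =ᵐ[μ.restrict E] f' := ae_restrict_of_ae_restrict_of_subset hEB hff'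
  have haeE : ∀ᵐ x ∂μ.restrict E, |f x - c| ≤ lam := by
    filter_upwards [hffE, ae_restrict_mem hEm] with x h1 h2
    rw [h1]
    exact h2.2
  have hsup : essSup f (μ.restrict E) ≤ c + lam := by
    rw [essSup_eq_sInf]
    refine csInf_le ⟨c - T, fun a ha => k2 a ha⟩ ?_
    have hae : ∀ᵐ x ∂μ.restrict E, ¬ (c + lam < f x) := by
      filter_upwards [haeE] with x hx
      have := (abs_le.1 hx).2
      intro h; linarith
    have h0 := ae_iff.1 hae
    simpa only [not_not, Set.mem_setOf_eq] using h0
  have hinf : c - lam ≤ essInf f (μ.restrict E) := by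
    rw [essInf_eq_sSup]
    refine le_csSup ⟨c + T, fun a ha => k1 a ha⟩ ?_
    have hae : ∀ᵐ x ∂μ.restrict E, ¬ (f x < c - lam) := by
      filter_upwards [haeE] with x hx
      have := (abs_le.1 hx).1
      intro h; linarith
    have h0 := ae_iff.1 hae
    simpa only [not_not, Set.mem_setOf_eq] using h0
  have hmem : osc μ E f ∈ {r : ℝ | ∃ E : Set X, MeasurableSet E ∧ E ⊆ B ∧
      ENNReal.ofReal α * μ B < μ E ∧ r = osc μ E f} := ⟨E, hEm, hEB, hEμ, rfl⟩
  have h1 := csInf_le bddS hmem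
  have h2 : osc μ E f ≤ 2 * (1 - α)⁻¹ * N + ε := by
    simp only [osc]
    have h3 : 2 * lam = 2 * (1 - α)⁻¹ * N + ε := by rw [hlam]; ring
    have h4 := sub_le_sub hsup hinf
    linarith [h4, h3]
  exact h1.trans h2
end

section
/- If (X,μ) is a measure space equipped with a ball-basis B and μ(X) < ∞, then X itself belongs to B. -/
open MeasureTheory

/-- A ball-basis on a measure space `(X, μ)` (Karagulyan). -/
structure BallBasis (X : Type*) [MeasurableSpace X] (μ : Measure X) where
  /-- the family of balls -/
  balls : Set (Set X)
  meas : ∀ B ∈ balls, MeasurableSet B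
  /-- B1): positive measure -/
  pos : ∀ B ∈ balls, 0 < μ B
  /-- B1): finite measure -/
  fin : ∀ B ∈ balls, μ B < ⊤
  /-- B2): any two points lie in a common ball -/
  two_points : ∀ x y : X, ∃ B ∈ balls, x ∈ B ∧ y ∈ B
  /-- B3): approximation of measurable sets by countable unions of balls -/
  approx : ∀ E : Set X, MeasurableSet E → ∀ ε : ENNReal, 0 < ε →
    ∃ Bs : ℕ → Set X, (∀ k, Bs k ∈ balls) ∧ μ (symmDiff E (⋃ k, Bs k)) < ε
  /-- the hull-ball `B*` -/
  hull : Set X → Set X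
  hull_mem : ∀ B ∈ balls, hull B ∈ balls
  /-- B4): every ball `A` with `μ(A) ≤ 2μ(B)` intersecting `B` lies in `B*` -/
  hull_sub : ∀ B ∈ balls, ∀ A ∈ balls, μ A ≤ 2 * μ B → (A ∩ B).Nonempty → A ⊆ hull B
  /-- the constant `K` -/
  K : NNReal
  /-- B4): `μ(B*) ≤ K μ(B)` -/
  hull_bound : ∀ B ∈ balls, μ (hull B) ≤ K * μ B

/-- If `(X,μ)` has a ball-basis and `μ(X) < ∞`, then `X` itself is a ball. -/
theorem univ_mem_ballBasis {X : Type*} [MeasurableSpace X] (μ : Measure X)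
    [Nonempty X] (𝓑 : BallBasis X μ) (hX : μ Set.univ < ⊤) :
    Set.univ ∈ 𝓑.balls := by
  set S : ENNReal := ⨆ B ∈ 𝓑.balls, μ B with hS
  obtain ⟨x⟩ := ‹Nonempty X›
  obtain ⟨B₀, hB₀, -, -⟩ := 𝓑.two_points x x
  have hSle : S ≤ μ Set.univ := by
    refine iSup₂_le fun B _ => measure_mono (Set.subset_univ _)
  have hSne : S ≠ ⊤ := (lt_of_le_of_lt hSle hX).ne
  have hSpos : S ≠ 0 := by
    intro h
    have : μ B₀ ≤ S := le_iSup₂ (f := fun B (_ : B ∈ 𝓑.balls) => μ B) B₀ hB₀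
    rw [h, le_zero_iff] at this
    exact (𝓑.pos B₀ hB₀).ne' this
  have hhalf : S / 2 < S := ENNReal.half_lt_self hSpos hSne
  obtain ⟨B, hB, hBlt⟩ : ∃ B ∈ 𝓑.balls, S / 2 < μ B := by
    have h := hhalf
    rw [hS, iSup_subtype'] at h
    obtain ⟨⟨B, hB⟩, hlt⟩ := lt_iSup_iff.mp h
    exact ⟨B, hB, by rw [hS, iSup_subtype']; exact hlt⟩
  have key : ∀ A ∈ 𝓑.balls, μ A ≤ 2 * μ B := by
    intro A hA
    have h1 : μ A ≤ S := le_iSup₂ (f := fun B (_ : B ∈ 𝓑.balls) => μ B) A hA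
    have h2 : S ≤ 2 * μ B := by
      have := (ENNReal.div_lt_iff (Or.inl two_ne_zero) (Or.inl ENNReal.ofNat_ne_top)).mp hBlt
      rw [mul_comm] at this
      exact this.le
    exact h1.trans h2
  have huniv : Set.univ = 𝓑.hull B := by
    apply Set.eq_of_subset_of_subset _ (Set.subset_univ _)
    intro z _
    obtain ⟨y, hyB⟩ : B.Nonempty := nonempty_of_measure_ne_zero (𝓑.pos B hB).ne'
    obtain ⟨A, hA, hzA, hyA⟩ := 𝓑.two_points z y
    exact 𝓑.hull_sub B hB A hA (key A hA) ⟨y, hyA, hyB⟩ hzA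
  rw [huniv]
  exact 𝓑.hull_mem B hB
end

section
/- Given a ball G in a ball-basis, there exists a finite or infinite increasing sequence of balls G = G_1, G_2, … with G_k* ⊂ G_{k+1}, whose union is X, and such that every ball B is contained in some G_n. -/
open MeasureTheory

namespace BallBasis

variable {X : Type*} [MeasurableSpace X] {μ : Measure X} (𝓑 : BallBasis X μ)

lemma nonempty_of_mem {B : Set X} (hB : B ∈ 𝓑.balls) : B.Nonempty := by
  rw [Set.nonempty_iff_ne_empty]
  rintro rfl
  simpa using 𝓑.pos _ hB

lemma subset_hull {B : Set X} (hB : B ∈ 𝓑.balls) : B ⊆ 𝓑.hull B :=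
  𝓑.hull_sub B hB B hB (le_mul_of_one_le_left zero_le one_le_two)
    (by simpa using 𝓑.nonempty_of_mem hB)

/-- If `A` and `B` both intersect `C` and have measure at most that of `C`,
then both are contained in `C*`. -/
lemma helper {A B C : Set X} (hA : A ∈ 𝓑.balls) (hB : B ∈ 𝓑.balls)
    (hC : C ∈ 𝓑.balls) (hAC : (A ∩ C).Nonempty) (hBC : (B ∩ C).Nonempty)
    (h1 : μ A ≤ μ C) (h2 : μ B ≤ μ C) :
    ∃ D ∈ 𝓑.balls, A ⊆ D ∧ B ⊆ D := by
  refine ⟨𝓑.hull C, 𝓑.hull_mem C hC, ?_, ?_⟩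
  · exact 𝓑.hull_sub C hC A hA (h1.trans (le_mul_of_one_le_left zero_le one_le_two)) hAC
  · exact 𝓑.hull_sub C hC B hB (h2.trans (le_mul_of_one_le_left zero_le one_le_two)) hBC

/-- Any two balls lie in a common ball. -/
lemma join {A B : Set X} (hA : A ∈ 𝓑.balls) (hB : B ∈ 𝓑.balls) :
    ∃ D ∈ 𝓑.balls, A ⊆ D ∧ B ⊆ D := by
  obtain ⟨x, hx⟩ := 𝓑.nonempty_of_mem hA
  obtain ⟨y, hy⟩ := 𝓑.nonempty_of_mem hB
  obtain ⟨C, hC, hxC, hyC⟩ := 𝓑.two_points x y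
  -- The "biggest" of A, B, C absorbs the others via hulls.
  rcases le_total (μ A) (μ B) with hab | hab
  · rcases le_total (μ B) (μ C) with hbc | hbc
    · exact 𝓑.helper hA hB hC ⟨x, hx, hxC⟩ ⟨y, hy, hyC⟩ (hab.trans hbc) hbc
    · -- B is biggest; C ⊆ B*
      have hCB : C ⊆ 𝓑.hull B :=
        𝓑.hull_sub B hB C hC (hbc.trans (le_mul_of_one_le_left zero_le one_le_two))
          ⟨y, hyC, hy⟩
      have hB' : 𝓑.hull B ∈ 𝓑.balls := 𝓑.hull_mem B hB
      have hBsub : B ⊆ 𝓑.hull B := 𝓑.subset_hull hB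
      refine 𝓑.helper hA hB hB' ⟨x, hx, hCB hxC⟩ ⟨y, hy, hBsub hy⟩
        (hab.trans (measure_mono hBsub)) (measure_mono hBsub)
  · rcases le_total (μ A) (μ C) with hac | hac
    · exact 𝓑.helper hA hB hC ⟨x, hx, hxC⟩ ⟨y, hy, hyC⟩ hac (hab.trans hac)
    · -- A is biggest; C ⊆ A*
      have hCA : C ⊆ 𝓑.hull A :=
        𝓑.hull_sub A hA C hC (hac.trans (le_mul_of_one_le_left zero_le one_le_two))
          ⟨x, hxC, hx⟩
      have hA' : 𝓑.hull A ∈ 𝓑.balls := 𝓑.hull_mem A hA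
      have hAsub : A ⊆ 𝓑.hull A := 𝓑.subset_hull hA
      refine 𝓑.helper hA hB hA' ⟨x, hx, hAsub hx⟩ ⟨y, hy, hCA hyC⟩
        (measure_mono hAsub) (hab.trans (measure_mono hAsub))

/-- One step of the exhausting construction. -/
lemma step {S : Set X} (hS : S ∈ 𝓑.balls) :
    ∃ S', S' ∈ 𝓑.balls ∧ 𝓑.hull S ⊆ S' ∧
      (2 * μ S ≤ μ S' ∨ ∀ A ∈ 𝓑.balls, μ A < 2 * μ S) := by
  by_cases h : ∃ A ∈ 𝓑.balls, 2 * μ S ≤ μ A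
  · obtain ⟨A, hA, hle⟩ := h
    obtain ⟨C, hC, h1, h2⟩ := 𝓑.join (𝓑.hull_mem S hS) hA
    exact ⟨C, hC, h1, Or.inl (hle.trans (measure_mono h2))⟩
  · push_neg at h
    exact ⟨𝓑.hull S, 𝓑.hull_mem S hS, subset_rfl, Or.inr h⟩

/-- The exhausting sequence of balls. -/
noncomputable def seq (G : Set X) (hG : G ∈ 𝓑.balls) : ℕ → {S : Set X // S ∈ 𝓑.balls} :=
  fun n => Nat.rec ⟨G, hG⟩
    (fun _ p => ⟨(𝓑.step p.2).choose, (𝓑.step p.2).choose_spec.1⟩) n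

lemma seq_spec (G : Set X) (hG : G ∈ 𝓑.balls) (n : ℕ) :
    𝓑.hull (𝓑.seq G hG n).1 ⊆ (𝓑.seq G hG (n + 1)).1 ∧
      (2 * μ (𝓑.seq G hG n).1 ≤ μ (𝓑.seq G hG (n + 1)).1 ∨
        ∀ A ∈ 𝓑.balls, μ A < 2 * μ (𝓑.seq G hG n).1) :=
  (𝓑.step (𝓑.seq G hG n).2).choose_spec.2

end BallBasis

/-- Given a ball `G`, there is an increasing sequence of balls `G = G₀ ⊆ G₁ ⊆ …`
with `Gₖ* ⊆ G_{k+1}`, whose union is `X`, and such that every ball is contained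
in some `Gₙ`. -/
theorem exists_exhausting_ball_sequence {X : Type*} [MeasurableSpace X]
    (μ : Measure X) (𝓑 : BallBasis X μ) (G : Set X) (hG : G ∈ 𝓑.balls) :
    ∃ Gs : ℕ → Set X, Gs 0 = G ∧ (∀ k, Gs k ∈ 𝓑.balls) ∧
      (∀ k, Gs k ⊆ Gs (k + 1)) ∧
      (∀ k, 𝓑.hull (Gs k) ⊆ Gs (k + 1)) ∧
      (⋃ k, Gs k) = Set.univ ∧
      (∀ B ∈ 𝓑.balls, ∃ n, B ⊆ Gs n) := by
  set Gs : ℕ → Set X := fun n => (𝓑.seq G hG n).1 with hGs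
  have hmem : ∀ k, Gs k ∈ 𝓑.balls := fun k => (𝓑.seq G hG k).2
  have hGs0 : Gs 0 = G := by rw [hGs]; rfl
  have hhull : ∀ k, 𝓑.hull (Gs k) ⊆ Gs (k + 1) := fun k => (𝓑.seq_spec G hG k).1
  have hstep : ∀ k, Gs k ⊆ Gs (k + 1) := fun k =>
    (𝓑.subset_hull (hmem k)).trans (hhull k)
  have hmono : Monotone Gs := monotone_nat_of_le_succ hstep
  -- key: every ball eventually has measure at most `2 μ (Gs n)`
  have key : ∀ B ∈ 𝓑.balls, ∃ n, μ B ≤ 2 * μ (Gs n) := by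
    intro B hB
    by_contra hcon
    push_neg at hcon
    have grow : ∀ n, 2 ^ n * μ G ≤ μ (Gs n) := by
      intro n
      induction n with
      | zero => simp [hGs0]
      | succ n ih =>
        rcases (𝓑.seq_spec G hG n).2 with hl | hr
        · calc 2 ^ (n + 1) * μ G = 2 * (2 ^ n * μ G) := by rw [pow_succ]; ring
            _ ≤ 2 * μ (Gs n) := by gcongr
            _ ≤ μ (Gs (n + 1)) := hl
        · exact absurd (hr B hB) (not_lt.2 (hcon n).le)
    have hGpos : μ G ≠ 0 := (𝓑.pos G hG).ne'
    have hGfin : μ G ≠ ⊤ := (𝓑.fin G hG).ne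
    have hBfin : μ B ≠ ⊤ := (𝓑.fin B hB).ne
    obtain ⟨m, hm⟩ := ENNReal.exists_nat_gt (ENNReal.div_lt_top hBfin hGpos).ne
    have hm2 : μ B / μ G < 2 ^ m := by
      refine hm.trans_le ?_
      have : (m : ℕ) ≤ 2 ^ m := (Nat.lt_two_pow_self (n := m)).le
      exact_mod_cast Nat.cast_le.2 this
    have hBlt : μ B < 2 ^ m * μ G :=
      (ENNReal.div_lt_iff (Or.inl hGpos) (Or.inl hGfin)).1 hm2
    have h1 : μ B < μ (Gs m) := hBlt.trans_le (grow m)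
    have h2 : μ (Gs m) < μ B :=
      lt_of_le_of_lt (le_mul_of_one_le_left zero_le one_le_two) (hcon m)
    exact absurd h1 (not_lt.2 h2.le)
  -- every ball intersecting G is absorbed
  have absorb : ∀ B ∈ 𝓑.balls, ∀ m, (B ∩ Gs m).Nonempty → ∃ n, B ⊆ Gs n := by
    intro B hB m hBm
    obtain ⟨n, hn⟩ := key B hB
    set N := max m n with hN
    have hint : (B ∩ Gs N).Nonempty := by
      obtain ⟨z, hz1, hz2⟩ := hBm
      exact ⟨z, hz1, hmono (le_max_left m n) hz2⟩
    have hle : μ B ≤ 2 * μ (Gs N) :=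
      hn.trans (mul_le_mul_right (measure_mono (hmono (le_max_right m n))) 2)
    exact ⟨N + 1, (𝓑.hull_sub (Gs N) (hmem N) B hB hle hint).trans (hhull N)⟩
  have huniv : (⋃ k, Gs k) = Set.univ := by
    rw [Set.eq_univ_iff_forall]
    intro x
    obtain ⟨y, hy⟩ := 𝓑.nonempty_of_mem hG
    obtain ⟨A, hA, hxA, hyA⟩ := 𝓑.two_points x y
    obtain ⟨n, hAn⟩ := absorb A hA 0 ⟨y, hyA, by simpa [hGs0] using hy⟩
    exact Set.mem_iUnion.2 ⟨n, hAn hxA⟩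
  refine ⟨Gs, hGs0, hmem, hstep, hhull, huniv, ?_⟩
  intro B hB
  obtain ⟨x, hx⟩ := 𝓑.nonempty_of_mem hB
  have : x ∈ ⋃ k, Gs k := huniv ▸ Set.mem_univ x
  obtain ⟨m, hm⟩ := Set.mem_iUnion.1 this
  exact absorb B hB m ⟨x, hx, hm⟩
end

section
/- Vitali-type covering lemma for ball-bases: if E ⊂ X is contained in some ball and a family G of balls covers E, then there exists a finite or countable sequence of pairwise disjoint balls G_k ∈ G such that E ⊂ ⋃_k G_k*. -/
open MeasureTheory

/-- Vitali-type covering lemma: if a bounded set `E` is covered by a family `𝒢`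
of balls, there is a countable pairwise disjoint subfamily `𝒢'` whose hull-balls
cover `E`. -/
theorem vitali_covering {X : Type*} [MeasurableSpace X] (μ : Measure X)
    (𝓑 : BallBasis X μ) (E : Set X) (hbdd : ∃ D ∈ 𝓑.balls, E ⊆ D)
    (𝒢 : Set (Set X)) (h𝒢 : 𝒢 ⊆ 𝓑.balls) (hcover : E ⊆ ⋃ G ∈ 𝒢, G) :
    ∃ 𝒢' ⊆ 𝒢, 𝒢'.Countable ∧ 𝒢'.PairwiseDisjoint id ∧
      E ⊆ ⋃ G ∈ 𝒢', 𝓑.hull G := by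
  obtain ⟨D, hD, hED⟩ := hbdd
  by_cases hcase : ∃ B ∈ 𝒢, (B ∩ E).Nonempty ∧ μ D ≤ 2 * μ B
  · -- one big ball suffices
    obtain ⟨B, hB𝒢, ⟨x, hxB, hxE⟩, hμ⟩ := hcase
    refine ⟨{B}, by simpa using hB𝒢, Set.countable_singleton B,
      Set.pairwiseDisjoint_singleton B id, ?_⟩
    have hDB : D ⊆ 𝓑.hull B :=
      𝓑.hull_sub B (h𝒢 hB𝒢) D hD hμ ⟨x, hED hxE, hxB⟩
    intro y hy
    simp only [Set.mem_iUnion, Set.mem_singleton_iff]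
    exact ⟨B, rfl, hDB (hED hy)⟩
  · push_neg at hcase
    set S : Set (Set X) := {B | B ∈ 𝒢 ∧ (B ∩ E).Nonempty} with hS
    have hSsub : ∀ A ∈ S, A ⊆ 𝓑.hull D := by
      intro A hA
      have h2 : 2 * μ A < μ D := hcase A hA.1 hA.2
      have hμA : μ A ≤ 2 * μ D := by
        have : μ A ≤ μ D :=
          le_of_lt (lt_of_le_of_lt (le_mul_of_one_le_left zero_le one_le_two) h2)
        exact le_trans this (le_mul_of_one_le_left zero_le one_le_two)
      obtain ⟨x, hxA, hxE⟩ := hA.2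
      exact 𝓑.hull_sub D hD A (h𝒢 hA.1) hμA ⟨x, hxA, hED hxE⟩
    have hHball : 𝓑.hull D ∈ 𝓑.balls := 𝓑.hull_mem D hD
    have hHfin : μ (𝓑.hull D) ≠ ⊤ := (𝓑.fin _ hHball).ne
    obtain ⟨u, huS, hudisj, hu⟩ :=
      Vitali.exists_disjoint_subfamily_covering_enlargement (id : Set X → Set X) S
        (fun A => (μ A).toReal) 2 one_lt_two (fun a _ => ENNReal.toReal_nonneg)
        ((μ (𝓑.hull D)).toReal)
        (fun a ha => ENNReal.toReal_mono hHfin (measure_mono (hSsub a ha)))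
        (fun a ha => ha.2.mono (Set.inter_subset_left))
    have hu𝒢 : u ⊆ 𝒢 := fun a ha => (huS ha).1
    -- countability
    have hcnt : u.Countable := by
      have hdisj : Pairwise (Function.onFun Disjoint fun i : ↥u => (i : Set X)) := by
        intro i j hij
        exact hudisj i.2 j.2 (fun h => hij (Subtype.ext h))
      have hmble : ∀ i : ↥u, MeasurableSet (i : Set X) :=
        fun i => 𝓑.meas _ (h𝒢 (hu𝒢 i.2))
      have hUfin : μ (⋃ i : ↥u, (i : Set X)) ≠ ⊤ := by
        refine ne_top_of_le_ne_top hHfin (measure_mono ?_)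
        exact Set.iUnion_subset fun i => hSsub _ (huS i.2)
      have := MeasureTheory.Measure.countable_meas_pos_of_disjoint_of_meas_iUnion_ne_top
        μ hmble hdisj hUfin
      have huniv : {i : ↥u | 0 < μ (i : Set X)} = Set.univ := by
        ext i
        simpa using 𝓑.pos _ (h𝒢 (hu𝒢 i.2))
      rw [huniv, Set.countable_univ_iff] at this
      exact Set.countable_coe_iff.mp this
    refine ⟨u, hu𝒢, hcnt, hudisj, ?_⟩
    intro x hx
    obtain ⟨G, hG𝒢, hxG⟩ := by simpa using hcover hx
    have hGS : G ∈ S := ⟨hG𝒢, ⟨x, hxG, hx⟩⟩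
    obtain ⟨b, hbu, hint, hle⟩ := hu G hGS
    have hbball : b ∈ 𝓑.balls := h𝒢 (hu𝒢 hbu)
    have hGfin : μ G ≠ ⊤ := (𝓑.fin G (h𝒢 hG𝒢)).ne
    have hbfin : (2 : ENNReal) * μ b ≠ ⊤ := by
      exact ENNReal.mul_ne_top (by norm_num) (𝓑.fin b hbball).ne
    have hμGb : μ G ≤ 2 * μ b := by
      rw [← ENNReal.toReal_le_toReal hGfin hbfin]
      rw [ENNReal.toReal_mul]
      simpa using hle
    have : G ⊆ 𝓑.hull b := 𝓑.hull_sub b hbball G (h𝒢 hG𝒢) hμGb hint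
    exact Set.mem_iUnion₂.mpr ⟨b, hbu, this hxG⟩
end

section
/- For any locally integrable f and balls A, B with A ∩ B ≠ ∅ and μ(A) ≤ μ(B), one has |f_A − f_B| ≤ C (μ(B)/μ(A)) · ⟨f⟩*_{#,A}, where C depends only on the constant K of the ball-basis. -/
open MeasureTheory

variable {X : Type*} [MeasurableSpace X] {μ : Measure X}

/-- The average `f_B` of `f` on `B`. -/
noncomputable def ballAvg (μ : Measure X) (B : Set X) (f : X → ℝ) : ℝ :=
  (μ B).toReal⁻¹ * ∫ x in B, f x ∂μ

/-- The mean oscillation `⟨f⟩_{#,B}` of `f` on `B`. -/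
noncomputable def sharpAvg (μ : Measure X) (B : Set X) (f : X → ℝ) : ℝ :=
  (μ B).toReal⁻¹ * ∫ x in B, |f x - ballAvg μ B f| ∂μ

lemma avg_sub_le (μ : Measure X) {A D : Set X} {f : X → ℝ}
    (hA0 : 0 < μ A) (hAfin : μ A < ⊤) (hDfin : μ D < ⊤)
    (hAD : A ⊆ D) (hfD : IntegrableOn f D μ) :
    |ballAvg μ A f - ballAvg μ D f| ≤ (μ D).toReal / (μ A).toReal * sharpAvg μ D f := by
  set c := ballAvg μ D f with hc
  have hμA : (0:ℝ) < (μ A).toReal := ENNReal.toReal_pos hA0.ne' hAfin.ne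
  have hμD : (0:ℝ) < (μ D).toReal := lt_of_lt_of_le hμA
    (ENNReal.toReal_le_toReal hAfin.ne hDfin.ne |>.2 (measure_mono hAD))
  have hfA : IntegrableOn f A μ := hfD.mono_set hAD
  have hcA : IntegrableOn (fun _ => c) A μ := integrableOn_const hAfin.ne
  have key : ballAvg μ A f - c = (μ A).toReal⁻¹ * ∫ x in A, (f x - c) ∂μ := by
    rw [integral_sub hfA hcA, setIntegral_const, smul_eq_mul, mul_sub, ballAvg]
    rw [← mul_assoc, Measure.real, inv_mul_cancel₀ hμA.ne', one_mul]
  have step1 : |ballAvg μ A f - c| ≤ (μ A).toReal⁻¹ * ∫ x in A, |f x - c| ∂μ := by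
    rw [key, abs_mul, abs_of_nonneg (by positivity : (0:ℝ) ≤ (μ A).toReal⁻¹)]
    gcongr
    calc |∫ x in A, (f x - c) ∂μ| ≤ ∫ x in A, |f x - c| ∂μ := by
          simpa [Real.norm_eq_abs] using norm_integral_le_integral_norm (μ := μ.restrict A) (fun x => f x - c)
      _ ≤ ∫ x in A, |f x - c| ∂μ := le_refl _
  have hsub : IntegrableOn (fun x => |f x - c|) D μ :=
    ((hfD.sub (integrableOn_const hDfin.ne)).abs)
  have step2 : ∫ x in A, |f x - c| ∂μ ≤ ∫ x in D, |f x - c| ∂μ := by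
    apply setIntegral_mono_set hsub
    · filter_upwards with x using abs_nonneg _
    · exact Filter.Eventually.of_forall hAD
  have : |ballAvg μ A f - c| ≤ (μ A).toReal⁻¹ * ∫ x in D, |f x - c| ∂μ := by
    refine step1.trans ?_
    gcongr
  refine this.trans (le_of_eq ?_)
  rw [sharpAvg, ← hc]
  field_simp

/-- If `A ∩ B ≠ ∅` and `μ(A) ≤ μ(B)`, then
`|f_A - f_B| ≤ C (μ(B)/μ(A)) ⟨f⟩*_{#,A}` with `C` depending only on the
ball-basis constant (here `⟨f⟩*_{#,A}` is expressed through an upper bound `N`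
over all balls `C ⊇ A`). -/
theorem avg_diff_le {X : Type*} [MeasurableSpace X] (μ : Measure X)
    (𝓑 : BallBasis X μ) :
    ∃ C : ℝ, 0 < C ∧
      ∀ f : X → ℝ, (∀ B ∈ 𝓑.balls, IntegrableOn f B μ) →
      ∀ A ∈ 𝓑.balls, ∀ B ∈ 𝓑.balls, (A ∩ B).Nonempty → μ A ≤ μ B →
      ∀ N : ℝ, (∀ D ∈ 𝓑.balls, A ⊆ D → sharpAvg μ D f ≤ N) →
        |ballAvg μ A f - ballAvg μ B f| ≤
          C * ((μ B).toReal / (μ A).toReal) * N := by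
  refine ⟨2 * ((𝓑.K : ℝ) + 1), by positivity, ?_⟩
  intro f hf A hA B hB hAB hμ N hN
  set D := 𝓑.hull B with hDdef
  have hDmem : D ∈ 𝓑.balls := 𝓑.hull_mem B hB
  have hAD : A ⊆ D := 𝓑.hull_sub B hB A hA
    (hμ.trans (le_mul_of_one_le_left zero_le one_le_two)) hAB
  have hBD : B ⊆ D := by
    obtain ⟨x, hx⟩ := hAB
    exact 𝓑.hull_sub B hB B hB (le_mul_of_one_le_left zero_le one_le_two)
      ⟨x, hx.2, hx.2⟩
  have hfD : IntegrableOn f D μ := hf D hDmem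
  have hA0 := 𝓑.pos A hA
  have hAfin := 𝓑.fin A hA
  have hB0 := 𝓑.pos B hB
  have hBfin := 𝓑.fin B hB
  have hDfin := 𝓑.fin D hDmem
  have haT : (0:ℝ) < (μ A).toReal := ENNReal.toReal_pos hA0.ne' hAfin.ne
  have hbT : (0:ℝ) < (μ B).toReal := ENNReal.toReal_pos hB0.ne' hBfin.ne
  have hab : (μ A).toReal ≤ (μ B).toReal :=
    (ENNReal.toReal_le_toReal hAfin.ne hBfin.ne).2 hμ
  have hdK : (μ D).toReal ≤ (𝓑.K : ℝ) * (μ B).toReal := by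
    have := 𝓑.hull_bound B hB
    have h2 : (μ D).toReal ≤ ((𝓑.K : ENNReal) * μ B).toReal :=
      ENNReal.toReal_le_toReal hDfin.ne (by
        exact ENNReal.mul_ne_top ENNReal.coe_ne_top hBfin.ne) |>.2 this
    simpa [ENNReal.toReal_mul] using h2
  have hshN : sharpAvg μ D f ≤ N := hN D hDmem hAD
  have hsh0 : 0 ≤ sharpAvg μ D f := by
    rw [sharpAvg]
    have : 0 ≤ ∫ x in D, |f x - ballAvg μ D f| ∂μ :=
      integral_nonneg fun x => abs_nonneg _
    positivity
  have hN0 : 0 ≤ N := hsh0.trans hshN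
  have h1 : |ballAvg μ A f - ballAvg μ D f| ≤
      (μ D).toReal / (μ A).toReal * sharpAvg μ D f :=
    avg_sub_le μ hA0 hAfin hDfin hAD hfD
  have h2 : |ballAvg μ B f - ballAvg μ D f| ≤
      (μ D).toReal / (μ B).toReal * sharpAvg μ D f :=
    avg_sub_le μ hB0 hBfin hDfin hBD hfD
  have ratio1 : (μ D).toReal / (μ A).toReal ≤ (𝓑.K : ℝ) * ((μ B).toReal / (μ A).toReal) := by
    rw [mul_div_assoc']
    gcongr
  have ratio2 : (μ D).toReal / (μ B).toReal ≤ (𝓑.K : ℝ) * ((μ B).toReal / (μ A).toReal) := by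
    have h3 : (μ D).toReal / (μ B).toReal ≤ (𝓑.K : ℝ) := by
      rw [div_le_iff₀ hbT]; exact hdK
    have h4 : (1:ℝ) ≤ (μ B).toReal / (μ A).toReal := (one_le_div haT).2 hab
    calc (μ D).toReal / (μ B).toReal ≤ (𝓑.K : ℝ) := h3
      _ = (𝓑.K : ℝ) * 1 := (mul_one _).symm
      _ ≤ (𝓑.K : ℝ) * ((μ B).toReal / (μ A).toReal) := by
          gcongr
  calc |ballAvg μ A f - ballAvg μ B f|
      ≤ |ballAvg μ A f - ballAvg μ D f| + |ballAvg μ B f - ballAvg μ D f| := by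
        rw [abs_sub_comm (ballAvg μ B f)]; exact abs_sub_le _ _ _
    _ ≤ (𝓑.K : ℝ) * ((μ B).toReal / (μ A).toReal) * sharpAvg μ D f
        + (𝓑.K : ℝ) * ((μ B).toReal / (μ A).toReal) * sharpAvg μ D f := by
        gcongr
        · exact h1.trans (by gcongr)
        · exact h2.trans (by gcongr)
    _ = 2 * (𝓑.K : ℝ) * ((μ B).toReal / (μ A).toReal) * sharpAvg μ D f := by ring
    _ ≤ 2 * (𝓑.K : ℝ) * ((μ B).toReal / (μ A).toReal) * N := by
        gcongr
    _ ≤ 2 * ((𝓑.K : ℝ) + 1) * ((μ B).toReal / (μ A).toReal) * N := by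
        gcongr
        linarith
end

section
/- If f is locally integrable and the maximal function Mf(x₀) < ∞ at a single point x₀, then Mf(x) < ∞ for almost every x ∈ X. -/
open MeasureTheory

/-- The standard maximal function over the ball-basis. -/
noncomputable def BallBasis.maxFn {X : Type*} [MeasurableSpace X] {μ : Measure X}
    (𝓑 : BallBasis X μ) (f : X → ℝ) (x : X) : ENNReal :=
  ⨆ (B : Set X) (_ : B ∈ 𝓑.balls ∧ x ∈ B), (∫⁻ y in B, ‖f y‖₊ ∂μ) / μ B

section Aux

variable {X : Type*} [MeasurableSpace X] {μ : Measure X}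

lemma BallBasis.avg_le_maxFn (𝓑 : BallBasis X μ) (f : X → ℝ) {x : X} {B : Set X}
    (hB : B ∈ 𝓑.balls) (hx : x ∈ B) :
    (∫⁻ y in B, ‖f y‖₊ ∂μ) / μ B ≤ 𝓑.maxFn f x :=
  le_iSup_of_le B (le_iSup_of_le ⟨hB, hx⟩ le_rfl)

lemma BallBasis.maxFn_le (𝓑 : BallBasis X μ) (f : X → ℝ) {x : X} {c : ENNReal}
    (h : ∀ B ∈ 𝓑.balls, x ∈ B → (∫⁻ y in B, ‖f y‖₊ ∂μ) / μ B ≤ c) :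
    𝓑.maxFn f x ≤ c :=
  iSup_le fun B => iSup_le fun hB => h B hB.1 hB.2

lemma BallBasis.subset_hull_s13 (𝓑 : BallBasis X μ) {B : Set X} (hB : B ∈ 𝓑.balls) :
    B ⊆ 𝓑.hull B := by
  refine 𝓑.hull_sub B hB B hB (le_mul_of_one_le_left' one_le_two) ?_
  rw [Set.inter_self]
  exact MeasureTheory.nonempty_of_measure_ne_zero (𝓑.pos B hB).ne'

/-- The weak-`L¹` bound for the maximal function, proved via a Vitali covering
argument. -/
lemma BallBasis.weak_bound (𝓑 : BallBasis X μ) (g : X → ℝ) (hg : Integrable g μ)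
    {t : ENNReal} (ht0 : t ≠ 0) (htop : t ≠ ⊤) :
    μ {x | t < 𝓑.maxFn g x} ≤ 𝓑.K * (∫⁻ y, ‖g y‖₊ ∂μ) / t := by
  set L := ∫⁻ y, ‖g y‖₊ ∂μ with hLdef
  have hLlt : L < ⊤ := hg.2
  have hL : L ≠ ⊤ := hLlt.ne
  set F : Set (Set X) := {A | A ∈ 𝓑.balls ∧ t * μ A < ∫⁻ y in A, ‖g y‖₊ ∂μ} with hFdef
  have hFball : ∀ A ∈ F, A ∈ 𝓑.balls := fun A hA => hA.1
  have hFle : ∀ A ∈ F, μ A ≤ L / t := by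
    intro A hA
    have h1 : μ A * t ≤ L := by
      rw [mul_comm]
      exact le_trans hA.2.le (setLIntegral_le_lintegral _ _)
    exact (ENNReal.le_div_iff_mul_le (Or.inl ht0) (Or.inl htop)).2 h1
  have hLt_top : L / t ≠ ⊤ := (ENNReal.div_lt_top hL ht0).ne
  obtain ⟨u, huF, hdisj, hVit⟩ :=
    Vitali.exists_disjoint_subfamily_covering_enlargement (id : Set X → Set X) F
      (fun A => (μ A).toReal) 2 one_lt_two (fun a _ => ENNReal.toReal_nonneg)
      ((L / t).toReal) (fun a ha => ENNReal.toReal_mono hLt_top (hFle a ha))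
      (fun a ha => MeasureTheory.nonempty_of_measure_ne_zero
        (𝓑.pos a (hFball a ha)).ne')
  have hmu2 : ∀ a ∈ F, ∀ b ∈ u, (μ a).toReal ≤ 2 * (μ b).toReal → μ a ≤ 2 * μ b := by
    intro a ha b hb h
    have hb' : (2 : ENNReal) * μ b ≠ ⊤ :=
      ENNReal.mul_ne_top (by norm_num) (𝓑.fin b (hFball b (huF hb))).ne
    rw [← ENNReal.toReal_le_toReal (𝓑.fin a (hFball a ha)).ne hb']
    rwa [ENNReal.toReal_mul, ENNReal.toReal_ofNat]
  -- the set where the maximal function is large is covered by the hulls of `u`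
  have hcov : {x | t < 𝓑.maxFn g x} ⊆ ⋃ b ∈ u, 𝓑.hull b := by
    intro x hx
    rw [Set.mem_setOf_eq, BallBasis.maxFn, lt_iSup_iff] at hx
    obtain ⟨A, hA⟩ := hx
    rw [lt_iSup_iff] at hA
    obtain ⟨⟨hAball, hxA⟩, hAavg⟩ := hA
    have hAF : A ∈ F := by
      refine ⟨hAball, ?_⟩
      exact (ENNReal.lt_div_iff_mul_lt (Or.inl (𝓑.pos A hAball).ne')
        (Or.inl (𝓑.fin A hAball).ne)).1 hAavg
    obtain ⟨b, hbu, hne, hle⟩ := hVit A hAF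
    have hsub : A ⊆ 𝓑.hull b :=
      𝓑.hull_sub b (hFball b (huF hbu)) A hAball (hmu2 A hAF b hbu hle) hne
    exact Set.mem_biUnion hbu (hsub hxA)
  -- disjointness gives a bound on the total integral over the chosen balls
  have hsum_int : ∑' (b : u), ∫⁻ y in (b : Set X), ‖g y‖₊ ∂μ ≤ L := by
    rw [ENNReal.tsum_eq_iSup_sum]
    refine iSup_le fun s => ?_
    have hd : Set.PairwiseDisjoint (↑s : Set u) (fun b : u => (b : Set X)) := by
      intro b _ c _ hbc
      exact hdisj b.2 c.2 (fun h => hbc (Subtype.ext h))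
    have hm : ∀ b ∈ s, MeasurableSet ((b : u) : Set X) :=
      fun b _ => 𝓑.meas b (hFball b (huF b.2))
    rw [← lintegral_biUnion_finset hd hm]
    exact le_trans (lintegral_mono' Measure.restrict_le_self le_rfl) le_rfl
  have hpos_int : ∀ b : u, (0 : ENNReal) < ∫⁻ y in (b : Set X), ‖g y‖₊ ∂μ := by
    intro b
    have hbF : (b : Set X) ∈ F := huF b.2
    refine lt_of_le_of_lt ?_ hbF.2
    have : (0 : ENNReal) < t * μ (b : Set X) :=
      ENNReal.mul_pos ht0 (𝓑.pos _ (hFball _ hbF)).ne'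
    exact zero_le
  -- countability of `u`
  have hcnt : u.Countable := by
    have hfin : ∀ n : ℕ,
        {b : u | ((n : ENNReal))⁻¹ ≤ ∫⁻ y in (b : Set X), ‖g y‖₊ ∂μ}.Finite := by
      intro n
      exact ENNReal.finite_const_le_of_tsum_ne_top (ne_top_of_le_ne_top hL hsum_int)
        (ENNReal.inv_ne_zero.2 (ENNReal.natCast_ne_top n))
    have hU : (Set.univ : Set u) ⊆
        ⋃ n : ℕ, {b : u | ((n : ENNReal))⁻¹ ≤ ∫⁻ y in (b : Set X), ‖g y‖₊ ∂μ} := by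
      intro b _
      obtain ⟨n, hn⟩ := ENNReal.exists_inv_nat_lt (hpos_int b).ne'
      exact Set.mem_iUnion.2 ⟨n, hn.le⟩
    have : (Set.univ : Set u).Countable :=
      Set.Countable.mono hU (Set.countable_iUnion fun n => (hfin n).countable)
    have : Countable u := Set.countable_univ_iff.1 this
    exact Set.countable_coe_iff.1 this
  -- the measures of the chosen balls sum to at most `L / t`
  have hsum_meas : ∑' (b : u), μ (b : Set X) ≤ L / t := by
    have h1 : ∀ b : u, μ (b : Set X) ≤ (∫⁻ y in (b : Set X), ‖g y‖₊ ∂μ) / t := by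
      intro b
      have hbF : (b : Set X) ∈ F := huF b.2
      refine (ENNReal.le_div_iff_mul_le (Or.inl ht0) (Or.inl htop)).2 ?_
      rw [mul_comm]
      exact hbF.2.le
    calc ∑' (b : u), μ (b : Set X)
        ≤ ∑' (b : u), (∫⁻ y in (b : Set X), ‖g y‖₊ ∂μ) / t :=
          ENNReal.tsum_le_tsum h1
      _ = (∑' (b : u), ∫⁻ y in (b : Set X), ‖g y‖₊ ∂μ) / t := by
          simp only [div_eq_mul_inv, ENNReal.tsum_mul_right]
      _ ≤ L / t := by
          exact ENNReal.div_le_div_right hsum_int t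
  calc μ {x | t < 𝓑.maxFn g x} ≤ μ (⋃ b ∈ u, 𝓑.hull b) := measure_mono hcov
    _ ≤ ∑' (b : u), μ (𝓑.hull b) := measure_biUnion_le μ hcnt _
    _ ≤ ∑' (b : u), (𝓑.K : ENNReal) * μ (b : Set X) :=
        ENNReal.tsum_le_tsum fun b => 𝓑.hull_bound _ (hFball _ (huF b.2))
    _ = (𝓑.K : ENNReal) * ∑' (b : u), μ (b : Set X) := ENNReal.tsum_mul_left
    _ ≤ (𝓑.K : ENNReal) * (L / t) := mul_le_mul_right hsum_meas _
    _ = (𝓑.K : ENNReal) * L / t := (mul_div_assoc _ _ _).symm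

/-- The maximal function of an integrable function is a.e. finite (in the strong
sense that the set where it is infinite is null). -/
lemma BallBasis.maxFn_top_null (𝓑 : BallBasis X μ) (g : X → ℝ)
    (hg : Integrable g μ) : μ {x | 𝓑.maxFn g x = ⊤} = 0 := by
  set c := (𝓑.K : ENNReal) * (∫⁻ y, ‖g y‖₊ ∂μ) with hc
  have hLlt : (∫⁻ y, ‖g y‖₊ ∂μ) < ⊤ := hg.2
  have hcne : c ≠ ⊤ := ENNReal.mul_ne_top ENNReal.coe_ne_top hLlt.ne
  have hb : ∀ n : ℕ, μ {x | 𝓑.maxFn g x = ⊤} ≤ c / ((n : ENNReal) + 1) := by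
    intro n
    have h1 : {x | 𝓑.maxFn g x = ⊤} ⊆ {x | ((n : ENNReal) + 1) < 𝓑.maxFn g x} := by
      intro x hx
      rw [Set.mem_setOf_eq] at hx ⊢
      rw [hx]
      exact lt_top_iff_ne_top.2 (by simp)
    refine le_trans (measure_mono h1) ?_
    exact 𝓑.weak_bound g hg (by simp) (by simp)
  by_contra h
  obtain ⟨n, hn⟩ := ENNReal.exists_nat_gt (ENNReal.div_lt_top hcne h).ne
  have h2 : c < ((n : ENNReal) + 1) * μ {x | 𝓑.maxFn g x = ⊤} := by
    have := (ENNReal.div_lt_iff (Or.inl h) (Or.inr hcne)).1 hn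
    calc c < (n : ENNReal) * μ {x | 𝓑.maxFn g x = ⊤} := this
      _ ≤ ((n : ENNReal) + 1) * μ {x | 𝓑.maxFn g x = ⊤} :=
          mul_le_mul_left (le_add_of_nonneg_right zero_le) _
  have h3 : c / ((n : ENNReal) + 1) < μ {x | 𝓑.maxFn g x = ⊤} := by
    rw [ENNReal.div_lt_iff (Or.inl (by simp)) (Or.inl (by simp))]
    rwa [mul_comm]
  exact absurd (hb n) h3.not_ge

end Aux

/-- If `f` is locally integrable and `Mf(x₀) < ∞` at a single point, then
`Mf < ∞` almost everywhere (assuming the weak-`L¹` bound for `M`, where `μ`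
applied to arbitrary sets is the outer measure). -/
theorem maxFn_finite_ae {X : Type*} [MeasurableSpace X] (μ : Measure X)
    (𝓑 : BallBasis X μ) (C : ENNReal)
    (hweak : ∀ g : X → ℝ, Integrable g μ → ∀ t : ENNReal, 0 < t →
      μ {x | t < 𝓑.maxFn g x} ≤ C * (∫⁻ y, ‖g y‖₊ ∂μ) / t)
    (f : X → ℝ) (hf : ∀ B ∈ 𝓑.balls, IntegrableOn f B μ)
    (x₀ : X) (h₀ : 𝓑.maxFn f x₀ < ⊤) :
    ∀ᵐ x ∂μ, 𝓑.maxFn f x < ⊤ := by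
  classical
  -- the threshold `T` controlling averages over "large" balls
  set T : ENNReal := (𝓑.K : ENNReal) * 𝓑.maxFn f x₀ with hT
  have hTlt : T < ⊤ := ENNReal.mul_lt_top ENNReal.coe_lt_top h₀
  -- a cofinal sequence of balls containing `x₀`
  obtain ⟨D, hD, hDcof⟩ : ∃ D : ℕ → Set X, (∀ n, D n ∈ 𝓑.balls ∧ x₀ ∈ D n) ∧
      (∀ B ∈ 𝓑.balls, x₀ ∈ B → ∃ n, μ B ≤ 2 * μ (D n)) := by
    by_cases hM : (⨆ (B : Set X) (_ : B ∈ 𝓑.balls ∧ x₀ ∈ B), μ B) = ⊤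
    · have hex : ∀ n : ℕ, ∃ B : Set X, (B ∈ 𝓑.balls ∧ x₀ ∈ B) ∧ (n : ENNReal) < μ B := by
        intro n
        have h1 : (n : ENNReal) < ⨆ (B : Set X) (_ : B ∈ 𝓑.balls ∧ x₀ ∈ B), μ B := by
          rw [hM]; exact ENNReal.natCast_lt_top n
        rw [lt_iSup_iff] at h1
        obtain ⟨B, hB⟩ := h1
        rw [lt_iSup_iff] at hB
        obtain ⟨hB1, hB2⟩ := hB
        exact ⟨B, hB1, hB2⟩
      choose D hD1 hD2 using hex
      refine ⟨D, hD1, fun B hB _ => ?_⟩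
      obtain ⟨n, hn⟩ := ENNReal.exists_nat_gt (𝓑.fin B hB).ne
      exact ⟨n, le_trans (le_trans hn.le (hD2 n).le)
        (le_mul_of_one_le_left' one_le_two)⟩
    · set M := ⨆ (B : Set X) (_ : B ∈ 𝓑.balls ∧ x₀ ∈ B), μ B with hMdef
      obtain ⟨B₀, hB₀b, hB₀x, _⟩ := 𝓑.two_points x₀ x₀
      have hM0 : M ≠ 0 := by
        intro h
        have h1 : μ B₀ ≤ M := le_iSup_of_le B₀ (le_iSup_of_le ⟨hB₀b, hB₀x⟩ le_rfl)
        rw [h] at h1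
        exact (𝓑.pos B₀ hB₀b).ne' (le_antisymm h1 zero_le)
      have hhalf : M / 2 < M := ENNReal.half_lt_self hM0 hM
      rw [lt_iSup_iff] at hhalf
      obtain ⟨D₀, hD₀⟩ := hhalf
      rw [lt_iSup_iff] at hD₀
      obtain ⟨hD₀P, hD₀⟩ := hD₀
      refine ⟨fun _ => D₀, fun _ => hD₀P, fun B hB hx => ⟨0, ?_⟩⟩
      calc μ B ≤ M := le_iSup_of_le B (le_iSup_of_le ⟨hB, hx⟩ le_rfl)
        _ = M / 2 + M / 2 := (ENNReal.add_halves M).symm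
        _ ≤ μ D₀ + μ D₀ := add_le_add hD₀.le hD₀.le
        _ = 2 * μ D₀ := (two_mul _).symm
  -- the hulls of the cofinal sequence
  set E : ℕ → Set X := fun n => 𝓑.hull (D n) with hE
  have hEball : ∀ n, E n ∈ 𝓑.balls := fun n => 𝓑.hull_mem _ (hD n).1
  have hEx₀ : ∀ n, x₀ ∈ E n := fun n => 𝓑.subset_hull_s13 (hD n).1 (hD n).2
  have hEcof : ∀ B ∈ 𝓑.balls, x₀ ∈ B → ∃ n, B ⊆ E n := by
    intro B hB hx
    obtain ⟨n, hn⟩ := hDcof B hB hx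
    exact ⟨n, 𝓑.hull_sub (D n) (hD n).1 B hB hn ⟨x₀, hx, (hD n).2⟩⟩
  -- the localized functions
  set g : ℕ → X → ℝ := fun n => (E n).indicator f with hg
  have hgint : ∀ n, Integrable (g n) μ := fun n =>
    (integrable_indicator_iff (𝓑.meas _ (hEball n))).2 (hf _ (hEball n))
  have hNnull : ∀ n, μ {x | 𝓑.maxFn (g n) x = ⊤} = 0 :=
    fun n => 𝓑.maxFn_top_null (g n) (hgint n)
  -- the key inclusion
  have hincl : {x | ¬ 𝓑.maxFn f x < ⊤} ⊆ ⋃ n, {x | 𝓑.maxFn (g n) x = ⊤} := by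
    intro x hx
    rw [Set.mem_setOf_eq, not_lt, top_le_iff] at hx
    obtain ⟨B, hBball, hxB, hx₀B⟩ := 𝓑.two_points x x₀
    have hhullB : 𝓑.hull B ∈ 𝓑.balls := 𝓑.hull_mem _ hBball
    have hx₀hull : x₀ ∈ 𝓑.hull B := 𝓑.subset_hull_s13 hBball hx₀B
    obtain ⟨n, hBEn⟩ := hEcof (𝓑.hull B) hhullB hx₀hull
    -- key bound for every ball containing `x`
    have hkey : 𝓑.maxFn f x ≤ max T (𝓑.maxFn (g n) x) := by
      refine 𝓑.maxFn_le f fun A hAball hxA => ?_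
      by_cases hA2 : μ A ≤ 2 * μ B
      · -- small ball: contained in `E n`
        have hsubA : A ⊆ E n :=
          le_trans (𝓑.hull_sub B hBball A hAball hA2 ⟨x, hxA, hxB⟩)
            (le_trans (Set.Subset.refl _) hBEn)
        have hEq : ∫⁻ y in A, ‖f y‖₊ ∂μ = ∫⁻ y in A, ‖g n y‖₊ ∂μ := by
          refine setLIntegral_congr_fun (𝓑.meas A hAball) ?_
          intro y hy
          rw [hg]
          simp only [Set.indicator_of_mem (hsubA hy)]
        rw [hEq]
        exact le_trans (𝓑.avg_le_maxFn (g n) hAball hxA) (le_max_right _ _)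
      · -- large ball: controlled by the value at `x₀`
        push_neg at hA2
        have hBA : B ⊆ 𝓑.hull A := by
          refine 𝓑.hull_sub A hAball B hBball ?_ ⟨x, hxB, hxA⟩
          calc μ B ≤ 2 * μ B := le_mul_of_one_le_left' one_le_two
            _ ≤ μ A := hA2.le
            _ ≤ 2 * μ A := le_mul_of_one_le_left' one_le_two
        have hx₀A : x₀ ∈ 𝓑.hull A := hBA hx₀B
        have hHball : 𝓑.hull A ∈ 𝓑.balls := 𝓑.hull_mem _ hAball
        have hA0 : μ A ≠ 0 := (𝓑.pos A hAball).ne'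
        have hAtop : μ A ≠ ⊤ := (𝓑.fin A hAball).ne
        have hH0 : μ (𝓑.hull A) ≠ 0 := (𝓑.pos _ hHball).ne'
        have hHtop : μ (𝓑.hull A) ≠ ⊤ := (𝓑.fin _ hHball).ne
        have hinv : (μ A)⁻¹ ≤ (𝓑.K : ENNReal) / μ (𝓑.hull A) := by
          refine (ENNReal.le_div_iff_mul_le (Or.inl hH0) (Or.inl hHtop)).2 ?_
          calc (μ A)⁻¹ * μ (𝓑.hull A) ≤ (μ A)⁻¹ * ((𝓑.K : ENNReal) * μ A) :=
                mul_le_mul_right (𝓑.hull_bound A hAball) _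
            _ = (𝓑.K : ENNReal) := by
                rw [mul_comm (𝓑.K : ENNReal) (μ A), ← mul_assoc,
                  ENNReal.inv_mul_cancel hA0 hAtop, one_mul]
        calc (∫⁻ y in A, ‖f y‖₊ ∂μ) / μ A
            = (∫⁻ y in A, ‖f y‖₊ ∂μ) * (μ A)⁻¹ := by rw [div_eq_mul_inv]
          _ ≤ (∫⁻ y in 𝓑.hull A, ‖f y‖₊ ∂μ) * ((𝓑.K : ENNReal) / μ (𝓑.hull A)) :=
              mul_le_mul' (lintegral_mono_set (𝓑.subset_hull_s13 hAball)) hinv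
          _ = (𝓑.K : ENNReal) * ((∫⁻ y in 𝓑.hull A, ‖f y‖₊ ∂μ) / μ (𝓑.hull A)) := by
              rw [div_eq_mul_inv, div_eq_mul_inv, mul_left_comm]
          _ ≤ (𝓑.K : ENNReal) * 𝓑.maxFn f x₀ :=
              mul_le_mul_right (𝓑.avg_le_maxFn f hHball hx₀A) _
          _ ≤ max T (𝓑.maxFn (g n) x) := le_max_left _ _
    -- conclude that the localized maximal function is infinite at `x`
    have hgn : 𝓑.maxFn (g n) x = ⊤ := by
      by_contra h
      have h1 : max T (𝓑.maxFn (g n) x) < ⊤ := max_lt hTlt (lt_top_iff_ne_top.2 h)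
      rw [hx] at hkey
      exact absurd (top_le_iff.1 hkey) h1.ne
    exact Set.mem_iUnion.2 ⟨n, hgn⟩
  rw [ae_iff]
  exact measure_mono_null hincl (measure_iUnion_null hNnull)
end
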